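/- Let Φ be a Young function satisfying both the Δ2- and ∇2-conditions. Then there exists r with 1 < r < ∞ and a constant C_r > 0 such that for every t > 0, the Lebesgue–Stieltjes integral ∫₀ᵗ s^{-r} dΦ(s) ≤ C_r · Φ(t)/t^r. -/

import Mathlib

/-!
Splitting `(0, t]` into the pieces `(t / l ^ (k + 1), t / l ^ k]`, the ∇₂-condition gives
`Φ (t / l ^ k) ≤ Φ t / (2 l) ^ k`, so on the `k`-th piece the integral is at most
`(t / l ^ (k + 1)) ^ (-r) · Φ t / (2 l) ^ k = l ^ r · q ^ k · Φ t / t ^ r` with `q = l ^ r / (2 l)`.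
Choosing `r > 1` close enough to `1` that `l ^ r < 2 l` makes `q < 1`, and the geometric series
sums to `l ^ r / (1 - q) · Φ t / t ^ r`.
-/

open MeasureTheory Set

lemma le_div_pow_of_mul_le_comp_mul {f : ℝ → ℝ} {c l : ℝ} (hc : 0 < c) (hl : 0 < l)
    (hf : ∀ t > 0, c * f t ≤ f (l * t)) (k : ℕ) {t : ℝ} (ht : 0 < t) :
    f (t / l ^ k) ≤ f t / c ^ k := by
  induction k generalizing t with
  | zero => simp
  | succ k ih =>
    have hstep : f (t / l) ≤ f t / c := by
      rw [le_div_iff₀' hc]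
      simpa [mul_div_cancel₀ t hl.ne'] using hf (t / l) (by positivity)
    calc f (t / l ^ (k + 1)) = f (t / l / l ^ k) := by rw [div_div, pow_succ']
      _ ≤ f (t / l) / c ^ k := ih (by positivity)
      _ ≤ f t / c / c ^ k := by gcongr
      _ = f t / c ^ (k + 1) := by rw [div_div, pow_succ']

lemma Ioc_zero_subset_iUnion_Ioc_div_pow {l t : ℝ} (hl : 1 < l) :
    Ioc 0 t ⊆ ⋃ k : ℕ, Ioc (t / l ^ (k + 1)) (t / l ^ k) := by
  rintro x ⟨hx, hxt⟩
  obtain ⟨k, hle, hlt⟩ := exists_nat_pow_near ((one_le_div hx).2 hxt) hl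
  have hlk : 0 < l ^ k := pow_pos (zero_lt_one.trans hl) k
  refine mem_iUnion.2 ⟨k, ?_, ?_⟩
  · rwa [div_lt_iff₀ (hlk.trans_le hle |>.trans hlt), mul_comm, ← div_lt_iff₀ hx]
  · rwa [le_div_iff₀ hlk, mul_comm, ← le_div_iff₀ hx]

lemma setLIntegral_Ioc_rpow_neg_le {μ : Measure ℝ} {a b r : ℝ} (ha : 0 < a) (hr : 0 ≤ r) :
    ∫⁻ s in Ioc a b, ENNReal.ofReal (s ^ (-r)) ∂μ ≤ ENNReal.ofReal (a ^ (-r)) * μ (Ioc a b) := by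
  rw [← setLIntegral_const]
  refine setLIntegral_mono measurable_const fun s hs ↦ ENNReal.ofReal_le_ofReal ?_
  exact Real.rpow_le_rpow_of_nonpos ha hs.1.le (neg_nonpos.2 hr)

lemma rpow_neg_div_pow_succ_mul_div_pow {l t r c A : ℝ} (hl : 0 < l) (ht : 0 < t) (k : ℕ) :
    (t / l ^ (k + 1)) ^ (-r) * (A / c ^ k) = l ^ r * (l ^ r / c) ^ k * (A / t ^ r) := by
  rw [Real.rpow_neg (by positivity), Real.div_rpow ht.le (by positivity), inv_div,
    ← Real.rpow_pow_comm hl.le, div_pow, pow_succ]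
  ring

theorem StieltjesFunction.lintegral_Ioc_rpow_neg_le_of_mul_le_comp_mul (Φ : StieltjesFunction ℝ)
    (hnonneg : ∀ t, 0 ≤ t → 0 ≤ Φ t) {c l r : ℝ} (hl : 1 < l) (hr : 0 ≤ r) (hlr : l ^ r < c)
    (hΦ : ∀ t > 0, c * Φ t ≤ Φ (l * t)) {t : ℝ} (ht : 0 < t) :
    ∫⁻ s in Ioc 0 t, ENNReal.ofReal (s ^ (-r)) ∂Φ.measure
      ≤ ENNReal.ofReal (l ^ r / (1 - l ^ r / c) * (Φ t / t ^ r)) := by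
  have hl0 : 0 < l := zero_lt_one.trans hl
  have hc : 0 < c := (Real.rpow_pos_of_pos hl0 r).trans hlr
  set q := l ^ r / c
  have hq0 : 0 ≤ q := by positivity
  have hq1 : q < 1 := (div_lt_one hc).2 hlr
  have hA : 0 ≤ l ^ r * (Φ t / t ^ r) := by have := hnonneg t ht.le; positivity
  have hpiece (k : ℕ) : ∫⁻ s in Ioc (t / l ^ (k + 1)) (t / l ^ k), ENNReal.ofReal (s ^ (-r))
      ∂Φ.measure ≤ ENNReal.ofReal (l ^ r * (Φ t / t ^ r) * q ^ k) := by
    refine (setLIntegral_Ioc_rpow_neg_le (by positivity) hr).trans ?_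
    rw [StieltjesFunction.measure_Ioc, ← ENNReal.ofReal_mul (by positivity)]
    refine ENNReal.ofReal_le_ofReal ?_
    calc (t / l ^ (k + 1)) ^ (-r) * (Φ (t / l ^ k) - Φ (t / l ^ (k + 1)))
        ≤ (t / l ^ (k + 1)) ^ (-r) * (Φ t / c ^ k) := by
          gcongr
          linarith [le_div_pow_of_mul_le_comp_mul hc hl0 hΦ k ht, hnonneg (t / l ^ (k + 1))
            (by positivity)]
      _ = l ^ r * (Φ t / t ^ r) * q ^ k := by
          rw [rpow_neg_div_pow_succ_mul_div_pow hl0 ht]; ring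
  calc ∫⁻ s in Ioc 0 t, ENNReal.ofReal (s ^ (-r)) ∂Φ.measure
      ≤ ∑' k : ℕ, ∫⁻ s in Ioc (t / l ^ (k + 1)) (t / l ^ k), ENNReal.ofReal (s ^ (-r))
          ∂Φ.measure :=
        (lintegral_mono_set (Ioc_zero_subset_iUnion_Ioc_div_pow hl)).trans
          (lintegral_iUnion_le _ _)
    _ ≤ ∑' k : ℕ, ENNReal.ofReal (l ^ r * (Φ t / t ^ r) * q ^ k) := ENNReal.tsum_le_tsum hpiece
    _ = ENNReal.ofReal (l ^ r / (1 - q) * (Φ t / t ^ r)) := by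
        rw [← ENNReal.ofReal_tsum_of_nonneg (fun k ↦ mul_nonneg hA (pow_nonneg hq0 k))
          ((summable_geometric_of_lt_one hq0 hq1).mul_left _), tsum_mul_left,
          tsum_geometric_of_lt_one hq0 hq1]
        ring_nf

lemma exists_one_lt_rpow_lt_two_mul {l : ℝ} (hl : 0 < l) : ∃ r : ℝ, 1 < r ∧ l ^ r < 2 * l := by
  have hnear : ∀ᶠ r in nhds (1 : ℝ), l ^ r < 2 * l :=
    (Real.continuousAt_const_rpow hl.ne').eventually_lt continuousAt_const
      (by rw [Real.rpow_one]; linarith)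
  exact ((eventually_mem_nhdsWithin (s := Ioi 1)).and
    (hnear.filter_mono nhdsWithin_le_nhds)).exists

theorem stmt_5_general (Φ : StieltjesFunction ℝ)
    (hnonneg : ∀ t, 0 ≤ t → 0 ≤ Φ t)
    (hnabla2 : ∃ l : ℝ, 1 < l ∧ ∀ t > 0, 2 * l * Φ t ≤ Φ (l * t)) :
    ∃ r : ℝ, 1 < r ∧ ∃ Cr : ℝ, 0 < Cr ∧ ∀ t : ℝ, 0 < t →
      ∫⁻ s in Set.Ioc (0:ℝ) t, ENNReal.ofReal (s ^ (-r)) ∂Φ.measure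
        ≤ ENNReal.ofReal (Cr * (Φ t / t ^ r)) := by
  obtain ⟨l, hl, hΦ⟩ := hnabla2
  have hl0 : 0 < l := zero_lt_one.trans hl
  obtain ⟨r, hr, hlr⟩ := exists_one_lt_rpow_lt_two_mul hl0
  have hq : l ^ r / (2 * l) < 1 := (div_lt_one (by positivity)).2 hlr
  exact ⟨r, hr, l ^ r / (1 - l ^ r / (2 * l)), div_pos (Real.rpow_pos_of_pos hl0 r) (sub_pos.2 hq),
    fun t ht ↦ Φ.lintegral_Ioc_rpow_neg_le_of_mul_le_comp_mul hnonneg hl (by linarith) hlr hΦ ht⟩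

/-- If Φ is a Young function satisfying Δ2 and ∇2, then there exist
1 < r < ∞ and C_r > 0 such that ∫₀ᵗ s^{-r} dΦ(s) ≤ C_r Φ(t)/t^r for all t > 0,
where the integral is the Lebesgue–Stieltjes integral with respect to Φ. -/
theorem stmt_5 (Φ : StieltjesFunction ℝ)
    (hΦ0 : Φ 0 = 0)
    (hnonneg : ∀ t, 0 ≤ t → 0 ≤ Φ t)
    (hmono : StrictMonoOn Φ (Set.Ici 0))
    (hconv : ConvexOn ℝ (Set.Ici 0) Φ)
    (hΔ2 : ∃ μ : ℝ, 1 < μ ∧ ∀ t > 0, Φ (2 * t) ≤ μ * Φ t)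
    (hnabla2 : ∃ l : ℝ, 1 < l ∧ ∀ t > 0, 2 * l * Φ t ≤ Φ (l * t)) :
    ∃ r : ℝ, 1 < r ∧ ∃ Cr : ℝ, 0 < Cr ∧ ∀ t : ℝ, 0 < t →
      ∫⁻ s in Set.Ioc (0:ℝ) t, ENNReal.ofReal (s ^ (-r)) ∂Φ.measure
        ≤ ENNReal.ofReal (Cr * (Φ t / t ^ r)) :=
  stmt_5_general Φ hnonneg hnabla2
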